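/- arXiv:1903.11531 — 5 statements merged into one kernel-verified Lean document; each statement's English description precedes it below -/
import Mathlib

section
/- The function p ↦ f_s(p) is monotone nondecreasing on the interval [0,1]: for all real p, q with 0 ≤ p ≤ q ≤ 1, one has f_s(p) ≤ f_s(q). -/
open Finset

/-- Maximum of a real-valued function over a finite set (0 on the empty set). -/
noncomputable def finsetMax {α : Type*} (x : α → ℝ) (S : Finset α) : ℝ :=
  if h : S.Nonempty then S.sup' h x else 0

/-- `sggProgress G a s p` is `f_s(p)`: the conditional expectation of the squared
discrepancy `(a s - a t*)²` of the communication partner `t*` chosen by one step of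
sample greedy gossip at node `s` with node activation probability `p`. -/
noncomputable def sggProgress {V : Type*} [Fintype V] [DecidableEq V]
    (G : SimpleGraph V) [DecidableRel G.Adj] (a : V → ℝ) (s : V) (p : ℝ) : ℝ :=
  (∑ m ∈ Finset.Icc 1 (G.neighborFinset s).card,
      p ^ m * (1 - p) ^ ((G.neighborFinset s).card - m) *
        ∑ S ∈ (G.neighborFinset s).powersetCard m,
          finsetMax (fun t => (a s - a t) ^ 2) S)
    + (1 - p) ^ (G.neighborFinset s).card * (1 / ((G.neighborFinset s).card : ℝ)) *
        ∑ t ∈ G.neighborFinset s, (a s - a t) ^ 2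

/-! In the Bernstein basis of degree `d = |N(s)|`, the `m`-th coefficient of `f_s` is the average
over `m`-subsets `S ⊆ N(s)` of `max_{t ∈ S} (a s - a t)²` (for `m = 0`, the average over
singletons). Enlarging a set can only raise its maximum, so double counting the pairs `S ⊂ T`
with `|T| = |S| + 1` shows that these averages increase with `m`. A polynomial with nondecreasing
Bernstein coefficients is nondecreasing on `[0, 1]`: its derivative is `d` times the polynomial of
degree `d - 1` whose Bernstein coefficients are the successive differences. -/

section Bernstein

open Polynomial

theorem derivative_sum_C_mul_bernsteinPolynomial {R : Type*} [CommRing R] (n : ℕ) (h : ℕ → R) :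
    derivative (∑ ν ∈ range (n + 2), C (h ν) * bernsteinPolynomial R (n + 1) ν) =
      (n + 1 : R[X]) * ∑ ν ∈ range (n + 1), C (h (ν + 1) - h ν) * bernsteinPolynomial R n ν := by
  have shift := (sum_range_succ' (fun ν => C (h ν) * bernsteinPolynomial R n ν) (n + 1)).symm.trans
    (sum_range_succ _ (n + 1))
  simp only [bernsteinPolynomial.eq_zero_of_lt R n.lt_succ_self, mul_zero, add_zero] at shift
  simp only [derivative_sum, derivative_mul, derivative_C, zero_mul, zero_add]
  rw [sum_range_succ', bernsteinPolynomial.derivative_zero]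
  simp only [bernsteinPolynomial.derivative_succ, Nat.add_sub_cancel, C_sub, sub_mul, mul_sub,
    sum_sub_distrib, ← mul_assoc, mul_right_comm (C _) (_ : R[X]) (bernsteinPolynomial R n _),
    ← sum_mul]
  push_cast
  linear_combination (-(n + 1 : R[X])) * shift

theorem eval_bernsteinPolynomial_nonneg {n ν : ℕ} {x : ℝ} (hx : x ∈ Set.Icc (0 : ℝ) 1) :
    0 ≤ (bernsteinPolynomial ℝ n ν).eval x := by
  have h1x : 0 ≤ 1 - x := sub_nonneg.mpr hx.2
  simp only [bernsteinPolynomial, eval_mul, eval_pow, eval_natCast, eval_X, eval_sub, eval_one]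
  exact mul_nonneg (mul_nonneg (Nat.cast_nonneg _) (pow_nonneg hx.1 _)) (pow_nonneg h1x _)

theorem monotoneOn_sum_mul_eval_bernsteinPolynomial {n : ℕ} {h : ℕ → ℝ}
    (hh : ∀ ν < n, h ν ≤ h (ν + 1)) :
    MonotoneOn (fun x => ∑ ν ∈ range (n + 1), h ν * (bernsteinPolynomial ℝ n ν).eval x)
      (Set.Icc 0 1) := by
  obtain _ | n := n
  · simp [bernsteinPolynomial, monotoneOn_const]
  set P : ℝ[X] := ∑ ν ∈ range (n + 2), C (h ν) * bernsteinPolynomial ℝ (n + 1) ν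
  have hP : ∀ x, P.eval x = ∑ ν ∈ range (n + 2), h ν * (bernsteinPolynomial ℝ (n + 1) ν).eval x :=
    fun x => by simp [P, eval_finsetSum]
  simp only [← hP]
  refine monotoneOn_of_deriv_nonneg (convex_Icc 0 1) P.continuousOn P.differentiableOn ?_
  intro x hx
  rw [interior_Icc] at hx
  rw [Polynomial.deriv, derivative_sum_C_mul_bernsteinPolynomial, eval_mul, eval_finsetSum]
  refine mul_nonneg (by simp only [eval_add, eval_natCast, eval_one]; positivity) (sum_nonneg fun ν hν => ?_)
  rw [eval_mul, eval_C]
  exact mul_nonneg (sub_nonneg.mpr (hh ν (mem_range.mp hν)))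
    (eval_bernsteinPolynomial_nonneg (Set.Ioo_subset_Icc_self hx))

end Bernstein

section PowersetCard

variable {α : Type*}

theorem finsetMax_singleton (x : α → ℝ) (t : α) : finsetMax x {t} = x t := by
  simp [finsetMax]

theorem finsetMax_monotone {x : α → ℝ} (hx : ∀ t, 0 ≤ x t) :
    Monotone (finsetMax x) := by
  intro S T hST
  by_cases hS : S.Nonempty
  · rw [finsetMax, dif_pos hS, finsetMax, dif_pos (hS.mono hST)]
    exact sup'_mono x hST hS
  · obtain ⟨t, ht⟩ | hT := T.eq_empty_or_nonempty.symm
    · rw [finsetMax, dif_neg hS, finsetMax, dif_pos ⟨t, ht⟩]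
      exact (hx t).trans (le_sup' x ht)
    · simp [finsetMax, hS, hT]

theorem sum_powersetCard_sum_sdiff_insert [DecidableEq α] {M : Type*} [AddCommMonoid M]
    (N : Finset α) (m : ℕ) (F : Finset α → M) :
    ∑ S ∈ N.powersetCard m, ∑ t ∈ N \ S, F (insert t S) =
      (m + 1) • ∑ T ∈ N.powersetCard (m + 1), F T := by
  have hT : ∀ T ∈ N.powersetCard (m + 1), (m + 1) • F T = ∑ _t ∈ T, F T := fun T hT => by
    rw [sum_const, (mem_powersetCard.mp hT).2]
  rw [smul_sum, sum_congr rfl hT, sum_sigma', sum_sigma']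
  refine sum_bij' (fun x _ => ⟨insert x.2 x.1, x.2⟩) (fun x _ => ⟨x.1.erase x.2, x.2⟩)
    ?_ ?_ ?_ ?_ (fun _ _ => rfl)
  · rintro ⟨S, t⟩ hx
    simp only [mem_sigma, mem_powersetCard, mem_sdiff] at hx ⊢
    exact ⟨⟨insert_subset hx.2.1 hx.1.1, by rw [card_insert_of_notMem hx.2.2, hx.1.2]⟩,
      mem_insert_self t S⟩
  · rintro ⟨T, t⟩ hx
    simp only [mem_sigma, mem_powersetCard, mem_sdiff] at hx ⊢
    exact ⟨⟨(erase_subset t T).trans hx.1.1, by rw [card_erase_of_mem hx.2, hx.1.2]; rfl⟩,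
      hx.1.1 hx.2, notMem_erase t T⟩
  · rintro ⟨S, t⟩ hx
    simp only [mem_sigma, mem_sdiff] at hx
    simp [erase_insert hx.2.2]
  · rintro ⟨T, t⟩ hx
    simp only [mem_sigma] at hx
    simp [insert_erase hx.2]

theorem card_sub_mul_sum_powersetCard_le {F : Finset α → ℝ} (hF : Monotone F) (N : Finset α)
    (m : ℕ) :
    ((#N - m : ℕ) : ℝ) * ∑ S ∈ N.powersetCard m, F S ≤
      (m + 1) * ∑ T ∈ N.powersetCard (m + 1), F T := by
  classical
  calc ((#N - m : ℕ) : ℝ) * ∑ S ∈ N.powersetCard m, F S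
      = ∑ S ∈ N.powersetCard m, ∑ _t ∈ N \ S, F S := by
        rw [mul_sum]
        refine sum_congr rfl fun S hS => ?_
        obtain ⟨hSN, hSm⟩ := mem_powersetCard.mp hS
        rw [sum_const, card_sdiff_of_subset hSN, hSm, nsmul_eq_mul]
    _ ≤ ∑ S ∈ N.powersetCard m, ∑ t ∈ N \ S, F (insert t S) :=
        sum_le_sum fun S _ => sum_le_sum fun t _ => hF (subset_insert t S)
    _ = (m + 1) * ∑ T ∈ N.powersetCard (m + 1), F T := by
        rw [sum_powersetCard_sum_sdiff_insert, nsmul_eq_mul]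
        push_cast
        rfl

noncomputable def powersetCardAverage (F : Finset α → ℝ) (N : Finset α) (m : ℕ) : ℝ :=
  (∑ S ∈ N.powersetCard m, F S) / (#N).choose m

theorem powersetCardAverage_le_succ {F : Finset α → ℝ} (hF : Monotone F) {N : Finset α} {m : ℕ}
    (hm : m < #N) : powersetCardAverage F N m ≤ powersetCardAverage F N (m + 1) := by
  have hchoose : ((#N).choose (m + 1) : ℝ) * (m + 1) = (#N).choose m * ((#N - m : ℕ) : ℝ) := by
    exact_mod_cast Nat.choose_succ_right_eq (#N) m
  have hpos : (0 : ℝ) < (#N).choose m := by exact_mod_cast Nat.choose_pos hm.le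
  have hpos' : (0 : ℝ) < (#N).choose (m + 1) := by exact_mod_cast Nat.choose_pos hm
  rw [powersetCardAverage, powersetCardAverage, div_le_div_iff₀ hpos hpos']
  refine le_of_mul_le_mul_right ?_ (by positivity : (0 : ℝ) < m + 1)
  calc (∑ S ∈ N.powersetCard m, F S) * (#N).choose (m + 1) * (m + 1)
      = (#N).choose m * (((#N - m : ℕ) : ℝ) * ∑ S ∈ N.powersetCard m, F S) := by
        rw [mul_assoc, hchoose]; ring
    _ ≤ (#N).choose m * ((m + 1) * ∑ T ∈ N.powersetCard (m + 1), F T) :=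
        mul_le_mul_of_nonneg_left (card_sub_mul_sum_powersetCard_le hF N m) hpos.le
    _ = (∑ T ∈ N.powersetCard (m + 1), F T) * (#N).choose m * (m + 1) := by ring

theorem powersetCardAverage_one (x : α → ℝ) (N : Finset α) :
    powersetCardAverage (finsetMax x) N 1 = (1 / #N : ℝ) * ∑ t ∈ N, x t := by
  simp [powersetCardAverage, powersetCard_one, finsetMax_singleton, div_eq_inv_mul]

theorem powersetCardAverage_mul_eval_bernsteinPolynomial (F : Finset α → ℝ)
    (N : Finset α) {m : ℕ} (hm : m ≤ #N) (x : ℝ) :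
    powersetCardAverage F N m * (bernsteinPolynomial ℝ #N m).eval x =
      x ^ m * (1 - x) ^ (#N - m) * ∑ S ∈ N.powersetCard m, F S := by
  have : ((#N).choose m : ℝ) ≠ 0 := by exact_mod_cast (Nat.choose_pos hm).ne'
  simp only [powersetCardAverage, bernsteinPolynomial, Polynomial.eval_mul, Polynomial.eval_pow,
    Polynomial.eval_natCast, Polynomial.eval_X, Polynomial.eval_sub, Polynomial.eval_one]
  field_simp

end PowersetCard

theorem sggProgress_eq_sum_mul_eval_bernsteinPolynomial {V : Type*} [Fintype V] [DecidableEq V]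
    (G : SimpleGraph V) [DecidableRel G.Adj] (a : V → ℝ) (s : V) (x : ℝ) :
    sggProgress G a s x = ∑ m ∈ range (#(G.neighborFinset s) + 1),
      powersetCardAverage (finsetMax fun t => (a s - a t) ^ 2) (G.neighborFinset s) (max m 1) *
        (bernsteinPolynomial ℝ #(G.neighborFinset s) m).eval x := by
  have hrange : range (#(G.neighborFinset s) + 1) = insert 0 (Icc 1 #(G.neighborFinset s)) := by
    ext m; simp only [mem_range, mem_insert, mem_Icc]; omega
  rw [hrange, sum_insert (by simp), sggProgress, add_comm]
  congr 1
  · rw [max_eq_right zero_le_one, powersetCardAverage_one]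
    simp only [bernsteinPolynomial, Nat.choose_zero_right, Nat.cast_one, pow_zero, one_mul,
      tsub_zero, Polynomial.eval_pow, Polynomial.eval_sub, Polynomial.eval_one, Polynomial.eval_X]
    ring
  · refine sum_congr rfl fun m hm => ?_
    obtain ⟨hm1, hmN⟩ := mem_Icc.mp hm
    rw [max_eq_left hm1, powersetCardAverage_mul_eval_bernsteinPolynomial _ _ hmN]

theorem sggProgress_monotone_general
    {V : Type*} [Fintype V] [DecidableEq V]
    (G : SimpleGraph V) [DecidableRel G.Adj] (a : V → ℝ) (s : V)
    (p q : ℝ) (hp : 0 ≤ p) (hpq : p ≤ q) (hq : q ≤ 1) :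
    sggProgress G a s p ≤ sggProgress G a s q := by
  have hF := finsetMax_monotone fun t => sq_nonneg (a s - a t)
  simp only [sggProgress_eq_sum_mul_eval_bernsteinPolynomial]
  refine monotoneOn_sum_mul_eval_bernsteinPolynomial (fun m hm => ?_)
    ⟨hp, hpq.trans hq⟩ ⟨hp.trans hpq, hq⟩ hpq
  obtain _ | m := m
  · rfl
  · rw [max_eq_left (Nat.le_add_left 1 m), max_eq_left (Nat.le_add_left 1 (m + 1))]
    exact powersetCardAverage_le_succ hF hm

/-- `f_s` is monotone nondecreasing on `[0,1]`. -/
theorem sggProgress_monotone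
    {V : Type*} [Fintype V] [DecidableEq V]
    (G : SimpleGraph V) [DecidableRel G.Adj] (a : V → ℝ) (s : V)
    (hN : (G.neighborFinset s).Nonempty)
    (p q : ℝ) (hp : 0 ≤ p) (hpq : p ≤ q) (hq : q ≤ 1) :
    sggProgress G a s p ≤ sggProgress G a s q :=
  sggProgress_monotone_general G a s p q hp hpq hq
end

section
/- For every real p with 0 ≤ p ≤ 1, f_s(p) ≥ (1/d)·Σ_{t∈N(s)} (a(s)−a(t))²; that is, the per-node expected one-step progress of sample greedy gossip is at least that of randomised gossip (the uniform average of the squared discrepancies over the neighborhood). -/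
open Finset

lemma count_mem_powersetCard {α : Type*} [DecidableEq α] (u : Finset α) {t : α}
    (ht : t ∈ u) {m : ℕ} (hm : 1 ≤ m) :
    ((u.powersetCard m).filter (fun S => t ∈ S)).card = (u.card - 1).choose (m - 1) := by
  have : (#u - 1).choose (m-1) = #((u.erase t).powersetCard (m-1)) := by
    rw [Finset.card_powersetCard, Finset.card_erase_of_mem ht]
  rw [this]
  apply Finset.card_bij (fun S _ => S.erase t)
  · rintro S hS
    simp only [mem_filter, mem_powersetCard] at hS
    simp only [mem_powersetCard]
    exact ⟨erase_subset_erase _ hS.1.1, by rw [card_erase_of_mem hS.2, hS.1.2]⟩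
  · rintro S hS S' hS' h
    simp only [mem_filter] at hS hS'
    rw [← insert_erase hS.2, ← insert_erase hS'.2, h]
  · rintro T hT
    simp only [mem_powersetCard] at hT
    have htT : t ∉ T := fun h => (notMem_erase t u) (hT.1 h)
    refine ⟨insert t T, ?_, ?_⟩
    · simp only [mem_filter, mem_powersetCard]
      refine ⟨⟨insert_subset ht (hT.1.trans (erase_subset _ _)), ?_⟩, mem_insert_self _ _⟩
      rw [card_insert_of_notMem htT, hT.2]
      omega
    · rw [erase_insert htT]

lemma sum_powersetCard_sum {α : Type*} [DecidableEq α] (u : Finset α) (w : α → ℝ)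
    {m : ℕ} (hm : 1 ≤ m) :
    ∑ S ∈ u.powersetCard m, ∑ t ∈ S, w t
      = ((u.card - 1).choose (m - 1) : ℝ) * ∑ t ∈ u, w t := by
  have h1 : ∀ S ∈ u.powersetCard m, ∑ t ∈ S, w t = ∑ t ∈ u, if t ∈ S then w t else 0 := by
    intro S hS
    rw [Finset.sum_ite_mem, Finset.inter_eq_right.mpr (mem_powersetCard.mp hS).1]
  rw [Finset.sum_congr rfl h1, Finset.sum_comm, Finset.mul_sum]
  refine Finset.sum_congr rfl fun t ht => ?_
  rw [← Finset.sum_filter, Finset.sum_const, count_mem_powersetCard u ht hm]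
  simp [mul_comm]

lemma sum_le_card_mul_finsetMax {α : Type*} (S : Finset α) (w : α → ℝ) :
    ∑ t ∈ S, w t ≤ (S.card : ℝ) * finsetMax w S := by
  rcases S.eq_empty_or_nonempty with rfl | h
  · simp
  · rw [finsetMax, dif_pos h]
    calc ∑ t ∈ S, w t ≤ ∑ _t ∈ S, S.sup' h w :=
          Finset.sum_le_sum fun t ht => Finset.le_sup' w ht
      _ = (S.card : ℝ) * S.sup' h w := by rw [Finset.sum_const, nsmul_eq_mul]

/-- The per-node expected one-step progress of sample greedy gossip is at least
that of randomised gossip. -/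
theorem sggProgress_ge_randomised
    {V : Type*} [Fintype V] [DecidableEq V]
    (G : SimpleGraph V) [DecidableRel G.Adj] (a : V → ℝ) (s : V)
    (hN : (G.neighborFinset s).Nonempty)
    (p : ℝ) (hp : 0 ≤ p) (hp1 : p ≤ 1) :
    (1 / ((G.neighborFinset s).card : ℝ)) *
        ∑ t ∈ G.neighborFinset s, (a s - a t) ^ 2 ≤ sggProgress G a s p := by
  set u := G.neighborFinset s with hu
  set d := u.card with hd
  set w : V → ℝ := fun t => (a s - a t) ^ 2 with hw
  set W : ℝ := ∑ t ∈ u, w t with hWdef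
  have hd0 : 0 < d := Finset.card_pos.mpr hN
  have hdR : (0 : ℝ) < d := by exact_mod_cast hd0
  have hW0 : 0 ≤ W := Finset.sum_nonneg fun t _ => sq_nonneg _
  have hq : 0 ≤ 1 - p := by linarith
  -- key pointwise bound
  have key : ∀ m ∈ Finset.Icc 1 d, (d.choose m : ℝ) / d * W ≤
      ∑ S ∈ u.powersetCard m, finsetMax w S := by
    intro m hm
    rw [Finset.mem_Icc] at hm
    have hm1 : 1 ≤ m := hm.1
    have hmR : (0 : ℝ) < m := by exact_mod_cast hm1
    have hsum : ((d - 1).choose (m - 1) : ℝ) * W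
        = ∑ S ∈ u.powersetCard m, ∑ t ∈ S, w t := (sum_powersetCard_sum u w hm1).symm
    have hbound : ∑ S ∈ u.powersetCard m, ∑ t ∈ S, w t
        ≤ (m : ℝ) * ∑ S ∈ u.powersetCard m, finsetMax w S := by
      rw [Finset.mul_sum]
      refine Finset.sum_le_sum fun S hS => ?_
      have hcard : S.card = m := (mem_powersetCard.mp hS).2
      calc ∑ t ∈ S, w t ≤ (S.card : ℝ) * finsetMax w S := sum_le_card_mul_finsetMax S w
        _ = (m : ℝ) * finsetMax w S := by rw [hcard]
    have hchoose : (d : ℝ) * ((d - 1).choose (m - 1) : ℝ) = (m : ℝ) * (d.choose m : ℝ) := by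
      have := Nat.add_one_mul_choose_eq (d - 1) (m - 1)
      have h1 : d - 1 + 1 = d := by omega
      have h2 : m - 1 + 1 = m := by omega
      simp only [Nat.succ_eq_add_one, h1, h2] at this
      exact_mod_cast this.trans (mul_comm _ _)
    rw [div_mul_eq_mul_div, div_le_iff₀ hdR]
    have h3 : ((d - 1).choose (m - 1) : ℝ) * W
        ≤ (m : ℝ) * ∑ S ∈ u.powersetCard m, finsetMax w S := hsum ▸ hbound
    have h5 : (m : ℝ) * ((d.choose m : ℝ) * W)
        ≤ (m : ℝ) * ((∑ S ∈ u.powersetCard m, finsetMax w S) * d) := by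
      calc (m : ℝ) * ((d.choose m : ℝ) * W)
          = (d : ℝ) * (((d - 1).choose (m - 1) : ℝ) * W) := by
            rw [← mul_assoc, ← hchoose]; ring
        _ ≤ (d : ℝ) * ((m : ℝ) * ∑ S ∈ u.powersetCard m, finsetMax w S) :=
            mul_le_mul_of_nonneg_left h3 hdR.le
        _ = (m : ℝ) * ((∑ S ∈ u.powersetCard m, finsetMax w S) * d) := by ring
    exact le_of_mul_le_mul_left h5 hmR
  -- binomial identity
  have hbinom : ∑ m ∈ Finset.Icc 1 d, p ^ m * (1 - p) ^ (d - m) * (d.choose m : ℝ)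
      + (1 - p) ^ d = 1 := by
    have hset : Finset.range (d + 1) = insert 0 (Finset.Icc 1 d) := by
      ext x; simp only [Finset.mem_range, Finset.mem_insert, Finset.mem_Icc]; omega
    have := add_pow p (1 - p) d
    rw [add_sub_cancel, one_pow, hset, Finset.sum_insert (by simp)] at this
    simp only [pow_zero, Nat.sub_zero, Nat.choose_zero_right, Nat.cast_one, one_mul, mul_one] at this
    linarith [this]
  -- combine
  have step : ∑ m ∈ Finset.Icc 1 d, p ^ m * (1 - p) ^ (d - m) * ((d.choose m : ℝ) / d * W)
      + (1 - p) ^ d * (1 / (d : ℝ)) * W ≤ sggProgress G a s p := by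
    unfold sggProgress
    rw [← hu, ← hd, ← hWdef]
    refine add_le_add (Finset.sum_le_sum fun m hm => ?_) le_rfl
    exact mul_le_mul_of_nonneg_left (key m hm)
      (mul_nonneg (pow_nonneg hp m) (pow_nonneg hq _))
  refine le_trans (le_of_eq ?_) step
  have : ∑ m ∈ Finset.Icc 1 d, p ^ m * (1 - p) ^ (d - m) * ((d.choose m : ℝ) / d * W)
      = (∑ m ∈ Finset.Icc 1 d, p ^ m * (1 - p) ^ (d - m) * (d.choose m : ℝ)) * (W / d) := by
    rw [Finset.sum_mul]
    exact Finset.sum_congr rfl fun m _ => by ring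
  rw [this]
  have h1 : (1:ℝ) / d * W = (∑ m ∈ Finset.Icc 1 d, p ^ m * (1 - p) ^ (d - m) * (d.choose m : ℝ)
      + (1 - p) ^ d) * (W / d) := by rw [hbinom]; ring
  rw [h1]; ring
end

section
/- Let N be a finite set with n = |N|, let x : N → ℝ, and let m be an integer with 1 ≤ m and m + 1 ≤ n. Then the normalized sum of subset maxima is monotone in the subset size: C(n, m+1) · Σ_{S ⊆ N, |S|=m} max_{t∈S} x(t) ≤ C(n, m) · Σ_{S ⊆ N, |S|=m+1} max_{t∈S} x(t). Equivalently, the average over all m-element subsets of the maximum of x is nondecreasing in m. -/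
open Finset

theorem finsetMax_mono {α : Type*} {x : α → ℝ} {S T : Finset α} (hS : S.Nonempty)
    (hST : S ⊆ T) : finsetMax x S ≤ finsetMax x T := by
  rw [finsetMax, finsetMax, dif_pos hS, dif_pos (hS.mono hST)]
  exact sup'_mono x hST hS

section DoubleCounting

variable {α M : Type*} [DecidableEq α] [AddCommMonoid M]

theorem sum_powersetCard_succ_sum_powersetCard (N : Finset α) (m : ℕ) (f : Finset α → M) :
    ∑ T ∈ N.powersetCard (m + 1), ∑ S ∈ T.powersetCard m, f S =
      (#N - m) • ∑ S ∈ N.powersetCard m, f S := by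
  rw [sum_comm' (t' := N.powersetCard m) (s' := fun S ↦ {T ∈ N.powersetCard (m + 1) | S ⊆ T}),
    smul_sum]
  · refine sum_congr rfl fun S hS ↦ ?_
    rw [mem_powersetCard] at hS
    rw [sum_const, card_filter_powersetCard_subset _ _ _ hS.1 (by omega), hS.2,
      Nat.add_sub_cancel_left, Nat.choose_one_right]
  · intro T S
    simp only [mem_powersetCard, mem_filter]
    constructor
    · rintro ⟨⟨hTN, hT⟩, hST, hS⟩
      exact ⟨⟨⟨hTN, hT⟩, hST⟩, hST.trans hTN, hS⟩
    · rintro ⟨⟨⟨hTN, hT⟩, hST⟩, -, hS⟩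
      exact ⟨⟨hTN, hT⟩, hST, hS⟩

theorem card_sub_nsmul_sum_powersetCard_le [PartialOrder M] [IsOrderedAddMonoid M]
    (N : Finset α) (m : ℕ) {f : Finset α → M} (hf : ∀ ⦃S T⦄, S ⊆ T → #S = m → f S ≤ f T) :
    (#N - m) • ∑ S ∈ N.powersetCard m, f S ≤ (m + 1) • ∑ T ∈ N.powersetCard (m + 1), f T := by
  rw [← sum_powersetCard_succ_sum_powersetCard, smul_sum]
  refine sum_le_sum fun T hT ↦ ?_
  have hcard : #(T.powersetCard m) = m + 1 := by
    rw [card_powersetCard, (mem_powersetCard.mp hT).2, Nat.choose_succ_self_right]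
  rw [← hcard]
  exact sum_le_card_nsmul _ _ _ fun S hS ↦ hf (mem_powersetCard.mp hS).1 (mem_powersetCard.mp hS).2

end DoubleCounting

theorem sum_subset_max_mono_general
    {α : Type*} [DecidableEq α] (N : Finset α) (x : α → ℝ) (m : ℕ)
    (hm1 : 1 ≤ m) :
    (N.card.choose (m + 1) : ℝ) * ∑ S ∈ N.powersetCard m, finsetMax x S ≤
      (N.card.choose m : ℝ) * ∑ S ∈ N.powersetCard (m + 1), finsetMax x S := by
  have key := card_sub_nsmul_sum_powersetCard_le N m (f := finsetMax x)
    fun S T hST hS ↦ finsetMax_mono (card_pos.mp (by omega)) hST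
  have hchoose : ((#N).choose (m + 1) : ℝ) * (m + 1) = (#N).choose m * (#N - m : ℕ) := by
    exact_mod_cast Nat.choose_succ_right_eq #N m
  rw [nsmul_eq_mul, nsmul_eq_mul] at key
  refine le_of_mul_le_mul_right ?_ (by positivity : (0 : ℝ) < m + 1)
  calc (#N).choose (m + 1) * (∑ S ∈ N.powersetCard m, finsetMax x S) * (m + 1)
      = (#N).choose m * ((#N - m : ℕ) * ∑ S ∈ N.powersetCard m, finsetMax x S) := by
        linear_combination (∑ S ∈ N.powersetCard m, finsetMax x S) * hchoose
    _ ≤ (#N).choose m * ((m + 1 : ℕ) * ∑ T ∈ N.powersetCard (m + 1), finsetMax x T) :=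
        mul_le_mul_of_nonneg_left key (by positivity)
    _ = (#N).choose m * (∑ T ∈ N.powersetCard (m + 1), finsetMax x T) * (m + 1) := by
        push_cast; ring

/-- The normalized sum of subset maxima is monotone in the subset size:
`C(n,m+1) * Σ_{|S|=m} max x ≤ C(n,m) * Σ_{|S|=m+1} max x`. -/
theorem sum_subset_max_mono
    {α : Type*} [DecidableEq α] (N : Finset α) (x : α → ℝ) (m : ℕ)
    (hm1 : 1 ≤ m) (hmn : m + 1 ≤ N.card) :
    (N.card.choose (m + 1) : ℝ) * ∑ S ∈ N.powersetCard m, finsetMax x S ≤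
      (N.card.choose m : ℝ) * ∑ S ∈ N.powersetCard (m + 1), finsetMax x S :=
  sum_subset_max_mono_general N x m hm1
end

section
/- Suppose in addition that G is connected and |V| ≥ 2 (so every vertex has a nonempty neighborhood). Then for every real p with 0 ≤ p ≤ 1, the total expected one-step progress of sample greedy gossip vanishes exactly at consensus: Σ_{s∈V} f_s(p) = 0 if and only if a is constant, i.e., a(u) = a(v) for all u, v ∈ V. In particular, unless all nodes agree on the average, sample greedy gossip makes strictly positive progress in expectation. -/
open Finset

/-! At a node `s` of degree `d`, all neighbours are sampled with probability `p ^ d`, and then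
the partner realises the largest discrepancy; none is sampled with probability `(1 - p) ^ d`,
and then the partner is uniform. So `f_s(p) ≥ (p ^ d + (1 - p) ^ d / d) (a s - a t) ^ 2` for
every neighbour `t`, with a positive coefficient on `[0, 1]`: the sum of the nonnegative
`f_s(p)` vanishes only if `a` agrees along every edge, i.e. is constant on a connected graph. -/

theorem SimpleGraph.Reachable.apply_eq_of_forall_adj {V β : Type*} {G : SimpleGraph V}
    {f : V → β} (hf : ∀ x y, G.Adj x y → f x = f y) {u v : V} (huv : G.Reachable u v) :
    f u = f v := by
  obtain ⟨w⟩ := huv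
  induction w with
  | nil => rfl
  | cons hadj _ ih => exact (hf _ _ hadj).trans ih

section finsetMax

variable {α : Type*} {x : α → ℝ} {S : Finset α}

lemma le_finsetMax {t : α} (ht : t ∈ S) : x t ≤ finsetMax x S := by
  rw [finsetMax, dif_pos ⟨t, ht⟩]
  exact le_sup' x ht

lemma finsetMax_nonneg (hx : ∀ i, 0 ≤ x i) : 0 ≤ finsetMax x S := by
  unfold finsetMax
  split_ifs with h
  · obtain ⟨i, hi⟩ := h
    exact (hx i).trans (le_sup' x hi)
  · rfl

lemma finsetMax_eq_zero (hx : ∀ i ∈ S, x i = 0) : finsetMax x S = 0 := by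
  unfold finsetMax
  split_ifs with h
  · rw [sup'_congr h rfl hx, sup'_const]
  · rfl

end finsetMax

section sggProgress

variable {V : Type*} [Fintype V] [DecidableEq V] {G : SimpleGraph V} [DecidableRel G.Adj]
  {a : V → ℝ} {s : V} {p : ℝ}

lemma sggProgress_nonneg (hp : 0 ≤ p) (hp1 : p ≤ 1) : 0 ≤ sggProgress G a s p := by
  have hq : 0 ≤ 1 - p := by linarith
  unfold sggProgress
  refine add_nonneg (sum_nonneg fun m _ => mul_nonneg (by positivity) ?_) (by positivity)
  exact sum_nonneg fun S _ => finsetMax_nonneg fun t => sq_nonneg _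

lemma mul_sq_sub_le_sggProgress (hp : 0 ≤ p) (hp1 : p ≤ 1) {t : V} (hst : G.Adj s t) :
    (p ^ (G.neighborFinset s).card + (1 - p) ^ (G.neighborFinset s).card *
        (1 / ((G.neighborFinset s).card : ℝ))) * (a s - a t) ^ 2 ≤ sggProgress G a s p := by
  set N := G.neighborFinset s
  have hq : 0 ≤ 1 - p := by linarith
  have ht : t ∈ N := (G.mem_neighborFinset s t).mpr hst
  have hN : N.card ∈ Icc 1 N.card := mem_Icc.mpr ⟨card_pos.mpr ⟨t, ht⟩, le_rfl⟩
  have hall : p ^ N.card * (a s - a t) ^ 2 ≤ ∑ m ∈ Icc 1 N.card,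
      p ^ m * (1 - p) ^ (N.card - m) *
        ∑ S ∈ N.powersetCard m, finsetMax (fun t => (a s - a t) ^ 2) S := by
    refine le_trans ?_ (single_le_sum (fun m _ => mul_nonneg (by positivity)
      (sum_nonneg fun S _ => finsetMax_nonneg fun t => sq_nonneg _)) hN)
    rw [Nat.sub_self, pow_zero, mul_one, powersetCard_self, sum_singleton]
    exact mul_le_mul_of_nonneg_left (le_finsetMax (x := fun t => (a s - a t) ^ 2) ht) (by positivity)
  have hnone : (a s - a t) ^ 2 ≤ ∑ t ∈ N, (a s - a t) ^ 2 :=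
    single_le_sum (f := fun t => (a s - a t) ^ 2) (fun t _ => sq_nonneg _) ht
  calc _ = p ^ N.card * (a s - a t) ^ 2
        + (1 - p) ^ N.card * (1 / (N.card : ℝ)) * (a s - a t) ^ 2 := by ring
    _ ≤ sggProgress G a s p := by
      unfold sggProgress
      gcongr

lemma sggProgress_eq_zero_iff (hp : 0 ≤ p) (hp1 : p ≤ 1) :
    sggProgress G a s p = 0 ↔ ∀ t, G.Adj s t → a s = a t := by
  constructor
  · intro h0 t hst
    have hcoeff : 0 < p ^ (G.neighborFinset s).card + (1 - p) ^ (G.neighborFinset s).card *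
        (1 / ((G.neighborFinset s).card : ℝ)) := by
      have hd : 0 < (G.neighborFinset s).card :=
        card_pos.mpr ⟨t, (G.mem_neighborFinset s t).mpr hst⟩
      rcases hp.eq_or_lt with rfl | hp0
      · rw [zero_pow hd.ne', sub_zero, one_pow]
        positivity
      · have : 0 ≤ 1 - p := by linarith
        positivity
    have hle := mul_sq_sub_le_sggProgress (a := a) hp hp1 hst
    rw [h0] at hle
    have hsq : (a s - a t) ^ 2 = 0 :=
      le_antisymm (nonpos_of_mul_nonpos_right hle hcoeff) (sq_nonneg _)
    exact sub_eq_zero.mp (pow_eq_zero_iff two_ne_zero |>.mp hsq)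
  · intro h
    have hsq : ∀ t ∈ G.neighborFinset s, (a s - a t) ^ 2 = 0 := fun t ht => by
      rw [h t ((G.mem_neighborFinset s t).mp ht), sub_self, sq, mul_zero]
    unfold sggProgress
    rw [sum_eq_zero hsq, mul_zero, add_zero]
    refine sum_eq_zero fun m _ => ?_
    rw [sum_eq_zero fun S hS => finsetMax_eq_zero fun t ht =>
      hsq t ((mem_powersetCard.mp hS).1 ht), mul_zero]

end sggProgress

theorem sum_sggProgress_eq_zero_iff_general
    {V : Type*} [Fintype V] [DecidableEq V]
    (G : SimpleGraph V) [DecidableRel G.Adj] (a : V → ℝ)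
    (hconn : G.Connected)
    (p : ℝ) (hp : 0 ≤ p) (hp1 : p ≤ 1) :
    ∑ s : V, sggProgress G a s p = 0 ↔ ∀ u v : V, a u = a v := by
  rw [sum_eq_zero_iff_of_nonneg fun s _ => sggProgress_nonneg hp hp1]
  simp only [mem_univ, true_implies, sggProgress_eq_zero_iff hp hp1]
  exact ⟨fun h u v => (hconn u v).apply_eq_of_forall_adj h, fun h s t _ => h s t⟩

/-- For a connected graph on at least two vertices, the total expected one-step
progress of sample greedy gossip vanishes exactly at consensus. -/
theorem sum_sggProgress_eq_zero_iff
    {V : Type*} [Fintype V] [DecidableEq V]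
    (G : SimpleGraph V) [DecidableRel G.Adj] (a : V → ℝ)
    (hconn : G.Connected) (hcard : 2 ≤ Fintype.card V)
    (p : ℝ) (hp : 0 ≤ p) (hp1 : p ≤ 1) :
    ∑ s : V, sggProgress G a s p = 0 ↔ ∀ u v : V, a u = a v :=
  sum_sggProgress_eq_zero_iff_general G a hconn p hp hp1
end

section
/- Let N be a finite set with n = |N| ≥ 1, let x : N → ℝ, let p be a real number with 0 ≤ p ≤ 1, and set m* = ⌊n·p⌋; assume m* ≥ 1. Then for every integer m with 1 ≤ m ≤ n: (m − n·p) · C(n, m*) · Σ_{S ⊆ N, |S|=m} max_{t∈S} x(t) ≥ (m − n·p) · C(n, m) · Σ_{S ⊆ N, |S|=m*} max_{t∈S} x(t). -/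
open Finset

lemma double_count {α : Type*} [DecidableEq α] (N : Finset α) (f : Finset α → ℝ) (k : ℕ)
    (hkn : k ≤ N.card) :
    ∑ T ∈ N.powersetCard k, (((N.card - k : ℕ) : ℝ) * f T)
      = ∑ S ∈ N.powersetCard (k + 1), ∑ t ∈ S, f (S.erase t) := by
  have h1 : ∀ T ∈ N.powersetCard k, ((N.card - k : ℕ) : ℝ) * f T = ∑ _a ∈ N \ T, f T := by
    intro T hT
    rw [Finset.mem_powersetCard] at hT
    rw [Finset.sum_const, Finset.card_sdiff_of_subset hT.1, hT.2, nsmul_eq_mul]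
  rw [Finset.sum_congr rfl h1, Finset.sum_sigma', Finset.sum_sigma']
  refine Finset.sum_nbij' (fun q => ⟨insert q.2 q.1, q.2⟩) (fun q => ⟨q.1.erase q.2, q.2⟩)
    ?_ ?_ ?_ ?_ ?_
  · rintro ⟨T, a⟩ hq
    simp only [Finset.mem_sigma, Finset.mem_powersetCard, Finset.mem_sdiff] at hq ⊢
    obtain ⟨⟨hTN, hTc⟩, haN, haT⟩ := hq
    refine ⟨⟨Finset.insert_subset haN hTN, ?_⟩, Finset.mem_insert_self _ _⟩
    rw [Finset.card_insert_of_notMem haT, hTc]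
  · rintro ⟨S, t⟩ hq
    simp only [Finset.mem_sigma, Finset.mem_powersetCard, Finset.mem_sdiff] at hq ⊢
    obtain ⟨⟨hSN, hSc⟩, htS⟩ := hq
    refine ⟨⟨(Finset.erase_subset _ _).trans hSN, ?_⟩, hSN htS, Finset.notMem_erase _ _⟩
    rw [Finset.card_erase_of_mem htS, hSc]; omega
  · rintro ⟨T, a⟩ hq
    simp only [Finset.mem_sigma, Finset.mem_sdiff] at hq
    simp [Finset.erase_insert hq.2.2]
  · rintro ⟨S, t⟩ hq
    simp only [Finset.mem_sigma] at hq
    simp [Finset.insert_erase hq.2]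
  · rintro ⟨T, a⟩ hq
    simp only [Finset.mem_sigma, Finset.mem_sdiff] at hq
    simp [Finset.erase_insert hq.2.2]

lemma step_ineq {α : Type*} [DecidableEq α] (N : Finset α) (x : α → ℝ) (k : ℕ)
    (hk : 1 ≤ k) (hkn : k + 1 ≤ N.card) :
    (((N.card - k : ℕ)) : ℝ) * ∑ T ∈ N.powersetCard k, finsetMax x T ≤
      ((k : ℝ) + 1) * ∑ S ∈ N.powersetCard (k + 1), finsetMax x S := by
  have hdc := double_count N (finsetMax x) k (le_trans (Nat.le_succ k) hkn)
  rw [Finset.mul_sum, hdc]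
  have h2 : ∀ S ∈ N.powersetCard (k + 1),
      ∑ t ∈ S, finsetMax x (S.erase t) ≤ ((k : ℝ) + 1) * finsetMax x S := by
    intro S hS
    rw [Finset.mem_powersetCard] at hS
    have hScard := hS.2
    have hbound : ∀ t ∈ S, finsetMax x (S.erase t) ≤ finsetMax x S := by
      intro t htS
      have hne : (S.erase t).Nonempty := by
        rw [← Finset.card_pos, Finset.card_erase_of_mem htS, hScard]
        omega
      have hne' : S.Nonempty := hne.mono (Finset.erase_subset _ _)
      rw [finsetMax, finsetMax, dif_pos hne, dif_pos hne']
      exact Finset.sup'_mono x (Finset.erase_subset _ _) hne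
    calc ∑ t ∈ S, finsetMax x (S.erase t) ≤ ∑ _t ∈ S, finsetMax x S :=
          Finset.sum_le_sum hbound
      _ = ((k : ℝ) + 1) * finsetMax x S := by
          rw [Finset.sum_const, hScard, nsmul_eq_mul]; push_cast; ring
  calc ∑ S ∈ N.powersetCard (k + 1), ∑ t ∈ S, finsetMax x (S.erase t)
      ≤ ∑ S ∈ N.powersetCard (k + 1), ((k : ℝ) + 1) * finsetMax x S :=
        Finset.sum_le_sum h2
    _ = ((k : ℝ) + 1) * ∑ S ∈ N.powersetCard (k + 1), finsetMax x S := by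
        rw [Finset.mul_sum]

lemma mono_ineq {α : Type*} [DecidableEq α] (N : Finset α) (x : α → ℝ) (k l : ℕ)
    (hk : 1 ≤ k) (hkl : k ≤ l) (hl : l ≤ N.card) :
    (N.card.choose l : ℝ) * ∑ S ∈ N.powersetCard k, finsetMax x S ≤
      (N.card.choose k : ℝ) * ∑ S ∈ N.powersetCard l, finsetMax x S := by
  induction l, hkl using Nat.le_induction with
  | base => exact le_rfl
  | succ l hkl ih =>
    have hln : l ≤ N.card := le_trans (Nat.le_succ l) hl
    have hIH := ih hln
    have hstep := step_ineq N x l (le_trans hk hkl) hl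
    set n := N.card
    set Sk := ∑ S ∈ N.powersetCard k, finsetMax x S
    set Sl := ∑ S ∈ N.powersetCard l, finsetMax x S
    set Sl1 := ∑ S ∈ N.powersetCard (l + 1), finsetMax x S
    have hchoose : (n.choose (l + 1) : ℝ) * ((l : ℝ) + 1) = (n.choose l : ℝ) * ((n - l : ℕ) : ℝ) := by
      have := Nat.choose_succ_right_eq n l
      have h' : (n.choose (l + 1) * (l + 1) : ℕ) = (n.choose l * (n - l) : ℕ) := this
      exact_mod_cast congrArg (fun t : ℕ => (t : ℝ)) h'
    have hcl : (0 : ℝ) ≤ (n.choose l : ℝ) := Nat.cast_nonneg _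
    have hck : (0 : ℝ) ≤ (n.choose k : ℝ) := Nat.cast_nonneg _
    have hclpos : (0 : ℝ) < (n.choose l : ℝ) := by
      exact_mod_cast Nat.choose_pos hln
    have hl1pos : (0 : ℝ) < (l : ℝ) + 1 := by positivity
    -- (n.choose (l+1)) * (l+1) * Sk = (n.choose l) * (n-l) * Sk
    --   ≤ (n.choose k) * (n-l) * Sl * ... careful with signs: multiply hIH by ((n-l:ℕ):ℝ) ≥ 0
    have h1 : (n.choose l : ℝ) * ((n - l : ℕ) : ℝ) * Sk ≤ (n.choose k : ℝ) * (((n - l : ℕ) : ℝ) * Sl) := by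
      have := mul_le_mul_of_nonneg_left hIH (by positivity : (0:ℝ) ≤ ((n - l : ℕ) : ℝ))
      nlinarith [this]
    have h2 : (n.choose k : ℝ) * (((n - l : ℕ) : ℝ) * Sl) ≤ (n.choose k : ℝ) * (((l : ℝ) + 1) * Sl1) :=
      mul_le_mul_of_nonneg_left hstep hck
    have h3 : (n.choose (l + 1) : ℝ) * ((l : ℝ) + 1) * Sk ≤ (n.choose k : ℝ) * (((l : ℝ) + 1) * Sl1) := by
      rw [hchoose]; exact le_trans h1 h2
    nlinarith [h3, hl1pos]

/-- For `m* = ⌊n·p⌋ ≥ 1` and `1 ≤ m ≤ n`,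
`(m − n·p) · C(n, m*) · Σ_{|S|=m} max x ≥ (m − n·p) · C(n, m) · Σ_{|S|=m*} max x`. -/
theorem signed_sum_subset_max_ineq
    {α : Type*} [DecidableEq α] (N : Finset α) (x : α → ℝ) (p : ℝ)
    (hp0 : 0 ≤ p) (hp1 : p ≤ 1) (hn : 1 ≤ N.card)
    (hstar : 1 ≤ ⌊(N.card : ℝ) * p⌋₊)
    (m : ℕ) (hm1 : 1 ≤ m) (hmn : m ≤ N.card) :
    ((m : ℝ) - (N.card : ℝ) * p) * (N.card.choose ⌊(N.card : ℝ) * p⌋₊ : ℝ) *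
        ∑ S ∈ N.powersetCard m, finsetMax x S ≥
      ((m : ℝ) - (N.card : ℝ) * p) * (N.card.choose m : ℝ) *
        ∑ S ∈ N.powersetCard ⌊(N.card : ℝ) * p⌋₊, finsetMax x S := by
  set n := N.card
  set ms := ⌊(n : ℝ) * p⌋₊ with hms
  have hmsn : ms ≤ n := by
    have : (n : ℝ) * p ≤ (n : ℝ) := by nlinarith [Nat.cast_nonneg (α := ℝ) n]
    calc ms ≤ ⌊(n : ℝ)⌋₊ := Nat.floor_mono this
      _ = n := Nat.floor_natCast n
  rcases le_or_gt ((n : ℝ) * p) (m : ℝ) with hcase | hcase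
  · -- m - n p ≥ 0, and ms ≤ m
    have hmsm : ms ≤ m := by
      calc ms ≤ ⌊(m : ℝ)⌋₊ := Nat.floor_mono hcase
        _ = m := Nat.floor_natCast m
    have hkey := mono_ineq N x ms m hstar hmsm hmn
    have hfac : (0 : ℝ) ≤ (m : ℝ) - (n : ℝ) * p := by linarith
    have := mul_le_mul_of_nonneg_left hkey hfac
    calc ((m : ℝ) - (n : ℝ) * p) * (n.choose m : ℝ) * ∑ S ∈ N.powersetCard ms, finsetMax x S
        = ((m : ℝ) - (n : ℝ) * p) * ((n.choose m : ℝ) * ∑ S ∈ N.powersetCard ms, finsetMax x S) := by ring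
      _ ≤ ((m : ℝ) - (n : ℝ) * p) * ((n.choose ms : ℝ) * ∑ S ∈ N.powersetCard m, finsetMax x S) := this
      _ = ((m : ℝ) - (n : ℝ) * p) * (n.choose ms : ℝ) * ∑ S ∈ N.powersetCard m, finsetMax x S := by ring
  · -- m - n p < 0, and m ≤ ms
    have hmms : m ≤ ms := Nat.le_floor hcase.le
    have hkey := mono_ineq N x m ms hm1 hmms hmsn
    have hfac : (m : ℝ) - (n : ℝ) * p ≤ 0 := by linarith
    have := mul_le_mul_of_nonpos_left hkey hfac
    calc ((m : ℝ) - (n : ℝ) * p) * (n.choose m : ℝ) * ∑ S ∈ N.powersetCard ms, finsetMax x S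
        = ((m : ℝ) - (n : ℝ) * p) * ((n.choose m : ℝ) * ∑ S ∈ N.powersetCard ms, finsetMax x S) := by ring
      _ ≤ ((m : ℝ) - (n : ℝ) * p) * ((n.choose ms : ℝ) * ∑ S ∈ N.powersetCard m, finsetMax x S) := this
      _ = ((m : ℝ) - (n : ℝ) * p) * (n.choose ms : ℝ) * ∑ S ∈ N.powersetCard m, finsetMax x S := by ring
end
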